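/- For x ∈ ℂ, let φ_x(w) = −exp(−2πi(w + τ − x)). The set of entire functions f : ℂ → ℂ satisfying f(w+1) = f(w) and f(w+τ) = φ_x(w)·f(w) for all w ∈ ℂ is a one-dimensional ℂ-subspace of the space of entire functions, spanned by θ_x(w) := θ(w + (1+τ)/2 − x); in particular θ_x is not identically zero and every such f is a scalar multiple of θ_x. -/

import Mathlib

open Complex Matrix

noncomputable section

/-- The third Jacobi theta function `θ(z) = ∑_{m ∈ ℤ} exp(πiτm² + 2πimz)`. -/
def theta3 (τ z : ℂ) : ℂ :=
  ∑' m : ℤ, Complex.exp (Real.pi * Complex.I * τ * (m : ℂ) ^ 2 +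
    2 * Real.pi * Complex.I * (m : ℂ) * z)

/-- The first Jacobi theta function
`θ̄(z) = 2 exp(πiτ/4) ∑_{m ≥ 0} (−1)^m exp(πiτ m(m+1)) sin((2m+1)πz)`. -/
def theta1 (τ z : ℂ) : ℂ :=
  2 * Complex.exp (Real.pi * Complex.I * τ / 4) *
    ∑' m : ℕ, (-1 : ℂ) ^ m * Complex.exp (Real.pi * Complex.I * τ * (m : ℂ) * ((m : ℂ) + 1)) *
      Complex.sin ((2 * (m : ℂ) + 1) * Real.pi * z)

/-- The Kronecker elliptic function `σ(u, z) = θ̄′(0) θ̄(u+z) / (θ̄(u) θ̄(z))`. -/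
def sigmaK (τ u z : ℂ) : ℂ :=
  deriv (theta1 τ) 0 * theta1 τ (u + z) / (theta1 τ u * theta1 τ z)

/-- `φ_x(w) = −exp(−2πi(w + τ − x))`. -/
def phiFactor (τ x w : ℂ) : ℂ := -Complex.exp (-(2 * Real.pi * Complex.I) * (w + τ - x))

/-- `θ_x(w) = θ(w + (1+τ)/2 − x)`. -/
def thetaX (τ x w : ℂ) : ℂ := theta3 τ (w + (1 + τ) / 2 - x)

/-!
The solutions form a subspace; the point is that it has dimension at most one. For an entire
1-periodic `f`, the integral of `f` over a horizontal unit segment does not depend on the height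
of the segment (Cauchy's theorem on a rectangle whose vertical sides cancel). Applied to
`f(w) e^{-2πinw}`, shifting the segment by `τ` and using `f(w+τ) = a e^{-2πiw} f(w)` gives the
recurrence `c_n = a e^{-2πinτ} c_{n+1}` between the Fourier coefficients of `f` on `ℝ`. Hence all
`c_n` vanish once `c_0 = ∫₀¹ f` does, so `f` vanishes on `ℝ` and therefore everywhere. Since
`∫₀¹ θ_x = 1` (only the constant term of the theta series survives), `f - (∫₀¹ f) θ_x` is a
solution with vanishing mean, hence zero.
-/

open Set Filter Function MeasureTheory Topology
open scoped Real

theorem Function.Periodic.intervalIntegral_comp_add_eq {F : ℂ → ℂ} (hper : Periodic F 1)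
    (hF : Differentiable ℂ F) (z : ℂ) :
    ∫ t in (0:ℝ)..1, F (t + z) = ∫ t in (0:ℝ)..1, F t := by
  have vertical (y : ℝ) : ∫ t in (0:ℝ)..1, F (t + y * I) = ∫ t in (0:ℝ)..1, F t := by
    have rect := integral_boundary_rect_eq_zero_of_differentiableOn F 0 (1 + y * I)
      hF.differentiableOn
    have sides : ∫ s in (0:ℝ)..y, F ((1:ℝ) + s * I) = ∫ s in (0:ℝ)..y, F (s * I) :=
      intervalIntegral.integral_congr fun s _ => by rw [ofReal_one, add_comm]; exact hper _
    simp only [zero_re, zero_im, add_re, one_re, mul_re, ofReal_re, I_re, mul_zero, ofReal_im,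
      I_im, mul_one, sub_self, add_zero, add_im, one_im, mul_im, zero_add, ofReal_zero,
      zero_mul, smul_eq_mul] at rect
    rw [sides] at rect
    linear_combination -rect
  have horizontal : ∫ t in (0:ℝ)..1, F (t + z) = ∫ t in (0:ℝ)..1, F (t + z.im * I) := by
    set G : ℝ → ℂ := fun s => F (s + z.im * I)
    have hG : Periodic G 1 := fun s => by
      simp only [G, ofReal_add, ofReal_one, add_right_comm _ (1:ℂ)]
      exact hper _
    calc ∫ t in (0:ℝ)..1, F (t + z) = ∫ t in (0:ℝ)..1, G (t + z.re) :=
          intervalIntegral.integral_congr fun t _ => by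
            simp only [G, ofReal_add, add_assoc, re_add_im]
      _ = ∫ t in z.re..z.re + 1, G t := by
          rw [intervalIntegral.integral_comp_add_right, zero_add, add_comm]
      _ = ∫ t in (0:ℝ)..0 + 1, G t := hG.intervalIntegral_add_eq _ _
      _ = ∫ t in (0:ℝ)..1, F (t + z.im * I) := by rw [zero_add]
  rw [horizontal, vertical]

theorem Function.Periodic.eq_zero_of_fourierCoeff_eq_zero {g : ℝ → ℂ} (hper : Periodic g 1)
    (hg : Continuous g)
    (h : ∀ n : ℤ, ∫ t in (0:ℝ)..1, exp (-(2 * π * I * n * t)) * g t = 0) : g = 0 := by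
  let G : C(UnitAddCircle, ℂ) := ⟨hper.lift, continuous_coinduced_dom.mpr hg⟩
  have hG : fourierCoeff G = 0 := funext fun n => by
    rw [fourierCoeff_eq_intervalIntegral _ n 0, Pi.zero_apply, ← h n]
    simp only [div_one, one_smul, zero_add, smul_eq_mul, fourier_coe_apply]
    refine intervalIntegral.integral_congr fun t _ => ?_
    simp only [G, ContinuousMap.coe_mk, Periodic.lift_coe]
    push_cast
    ring_nf
  funext t
  have := has_pointwise_sum_fourier_series_of_summable (f := G) (hG ▸ summable_zero) t
  simp only [hG, Pi.zero_apply, zero_smul] at this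
  exact this.unique hasSum_zero

theorem Differentiable.eq_zero_of_ofReal_eq_zero {h : ℂ → ℂ} (hh : Differentiable ℂ h)
    (h0 : ∀ t : ℝ, h t = 0) : h = 0 := by
  have hfreq : ∃ᶠ z in 𝓝[≠] (0:ℂ), h z = 0 := by
    have : Tendsto ((↑) : ℝ → ℂ) (𝓝[≠] 0) (𝓝[≠] 0) :=
      tendsto_nhdsWithin_of_tendsto_nhds_of_eventually_within _
        ((continuous_ofReal.tendsto' 0 0 ofReal_zero).mono_left nhdsWithin_le_nhds)
        (eventually_nhdsWithin_of_forall fun t ht => by simpa using ht)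
    exact this.frequently (Frequently.of_forall h0)
  funext z
  exact (hh.differentiableOn.analyticOnNhd isOpen_univ)
    |>.eqOn_zero_of_preconnected_of_frequently_eq_zero isPreconnected_univ (mem_univ 0) hfreq
    (mem_univ z)

def thetaFunctions (τ a : ℂ) : Submodule ℂ (ℂ → ℂ) where
  carrier := {f | Differentiable ℂ f ∧ Periodic f 1 ∧
    ∀ w, f (w + τ) = a * exp (-(2 * π * I * w)) * f w}
  add_mem' := by
    rintro f g ⟨hf, hf1, hfτ⟩ ⟨hg, hg1, hgτ⟩
    exact ⟨hf.add hg, hf1.add hg1, fun w => by simp only [Pi.add_apply, hfτ, hgτ]; ring⟩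
  zero_mem' := ⟨differentiable_const 0, fun _ => rfl, fun _ => by simp⟩
  smul_mem' := by
    rintro c f ⟨hf, hf1, hfτ⟩
    exact ⟨hf.const_smul c, hf1.smul c,
      fun w => by simp only [Pi.smul_apply, hfτ, smul_eq_mul]; ring⟩

namespace thetaFunctions

variable {τ a : ℂ} {f : ℂ → ℂ}

theorem fourierCoeff_eq_mul_fourierCoeff_succ (hf : f ∈ thetaFunctions τ a) (n : ℤ) :
    ∫ t in (0:ℝ)..1, exp (-(2 * π * I * n * t)) * f t =
      a * exp (-(2 * π * I * n * τ)) *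
        ∫ t in (0:ℝ)..1, exp (-(2 * π * I * (n + 1) * t)) * f t := by
  obtain ⟨hf, hf1, hfτ⟩ := hf
  set F : ℂ → ℂ := fun w => exp (-(2 * π * I * n * w)) * f w
  have hF1 : Periodic F 1 := fun w => by
    simp only [F, hf1 w]
    rw [show -(2 * π * I * n * (w + 1)) = -(2 * π * I * n * w) + (-n : ℤ) * (2 * π * I) by
      push_cast; ring, exp_add, exp_int_mul_two_pi_mul_I, mul_one]
  have hFτ (t : ℂ) : F (t + τ) =
      a * exp (-(2 * π * I * n * τ)) * (exp (-(2 * π * I * (n + 1) * t)) * f t) := by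
    simp only [F, hfτ]
    rw [show -(2 * π * I * n * (t + τ)) = -(2 * π * I * n * τ) + -(2 * π * I * n * t) by ring,
      show -(2 * π * I * (n + 1) * t) = -(2 * π * I * n * t) + -(2 * π * I * t) by ring,
      exp_add, exp_add]
    ring
  calc ∫ t in (0:ℝ)..1, F t = ∫ t in (0:ℝ)..1, F (t + τ) :=
        (hF1.intervalIntegral_comp_add_eq (by fun_prop) τ).symm
    _ = _ := by simp_rw [hFτ, intervalIntegral.integral_const_mul]

theorem fourierCoeff_eq_zero (ha : a ≠ 0) (hf : f ∈ thetaFunctions τ a)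
    (h0 : ∫ t in (0:ℝ)..1, f t = 0) (n : ℤ) :
    ∫ t in (0:ℝ)..1, exp (-(2 * π * I * n * t)) * f t = 0 := by
  induction n using Int.induction_on with
  | zero => simpa using h0
  | succ n ih =>
    have := fourierCoeff_eq_mul_fourierCoeff_succ hf n
    rw [ih, eq_comm, mul_eq_zero] at this
    push_cast
    exact this.resolve_left (mul_ne_zero ha (exp_ne_zero _))
  | pred n ih =>
    have := fourierCoeff_eq_mul_fourierCoeff_succ hf (-n - 1)
    push_cast at this ih ⊢
    rw [this, sub_add_cancel, ih, mul_zero]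

theorem eq_zero_of_integral_eq_zero (ha : a ≠ 0) (hf : f ∈ thetaFunctions τ a)
    (h0 : ∫ t in (0:ℝ)..1, f t = 0) : f = 0 := by
  have hper : Periodic (fun t : ℝ => f t) 1 := fun t => by simpa using hf.2.1 t
  exact hf.1.eq_zero_of_ofReal_eq_zero <| congrFun <| hper.eq_zero_of_fourierCoeff_eq_zero
    (hf.1.continuous.comp continuous_ofReal) (fourierCoeff_eq_zero ha hf h0)

theorem eq_integral_smul {g : ℂ → ℂ} (ha : a ≠ 0) (hf : f ∈ thetaFunctions τ a)
    (hg : g ∈ thetaFunctions τ a)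
    (hg1 : ∫ t in (0:ℝ)..1, g t = 1) : f = (∫ t in (0:ℝ)..1, f t) • g := by
  have integrable {h : ℂ → ℂ} (hh : h ∈ thetaFunctions τ a) :
      IntervalIntegrable (fun t : ℝ => h t) volume 0 1 :=
    (hh.1.continuous.comp continuous_ofReal).intervalIntegrable 0 1
  rw [← sub_eq_zero]
  refine eq_zero_of_integral_eq_zero ha (sub_mem hf (Submodule.smul_mem _ _ hg)) ?_
  simp only [Pi.sub_apply, Pi.smul_apply, smul_eq_mul]
  rw [intervalIntegral.integral_sub (integrable hf) ((integrable hg).const_mul _),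
    intervalIntegral.integral_const_mul, hg1, mul_one, sub_self]

end thetaFunctions

theorem theta3_eq_jacobiTheta₂ (τ z : ℂ) : theta3 τ z = jacobiTheta₂ z τ :=
  tsum_congr fun m => by rw [jacobiTheta₂_term]; ring_nf

theorem jacobiTheta₂_comp_add_mem_thetaFunctions {τ : ℂ} (hτ : 0 < τ.im) (c : ℂ) :
    (fun w => jacobiTheta₂ (w + c) τ) ∈
      thetaFunctions τ (exp (-(π * I * (τ + 2 * c)))) := by
  refine ⟨fun w => (differentiableAt_jacobiTheta₂_fst _ hτ).comp w (by fun_prop),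
    fun w => ?_, fun w => ?_⟩
  · simp only [add_right_comm w 1 c, jacobiTheta₂_add_left]
  · dsimp only
    rw [add_right_comm, jacobiTheta₂_add_left', ← exp_add]
    ring_nf

theorem integral_jacobiTheta₂_comp_add {τ : ℂ} (hτ : 0 < τ.im) (c : ℂ) :
    ∫ t in (0:ℝ)..1, jacobiTheta₂ (t + c) τ = 1 := by
  have term (n : ℤ) (t : ℝ) : jacobiTheta₂_term n (t + c) τ =
      jacobiTheta₂_term n c τ * exp ((2 * π * I * n) * t) := by
    rw [jacobiTheta₂_term, jacobiTheta₂_term, ← exp_add]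
    ring_nf
  have term_integral (n : ℤ) :
      ∫ t in (0:ℝ)..1, jacobiTheta₂_term n (t + c) τ = if n = 0 then 1 else 0 := by
    simp_rw [term, intervalIntegral.integral_const_mul]
    split_ifs with hn
    · simp [hn, jacobiTheta₂_term]
    · rw [integral_exp_mul_complex (by simp [hn, Real.pi_ne_zero])]
      rw [show 2 * π * I * n * ((1:ℝ):ℂ) = n * (2 * π * I) by push_cast; ring,
        exp_int_mul_two_pi_mul_I]
      simp
  have hsum := intervalIntegral.hasSum_integral_of_dominated_convergence
    (a := 0) (b := 1) (μ := volume)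
    (F := fun n (t : ℝ) => jacobiTheta₂_term n (t + c) τ)
    (fun n _ => ‖jacobiTheta₂_term n c τ‖)
    (fun n => (Continuous.aestronglyMeasurable (by simp_rw [term]; fun_prop)))
    (fun n => ae_of_all _ fun t _ => le_of_eq (by rw [term, norm_mul, norm_exp]; simp))
    (ae_of_all _ fun t _ => ((summable_jacobiTheta₂_term_iff c τ).mpr hτ).norm)
    intervalIntegrable_const
    (ae_of_all _ fun t _ => hasSum_jacobiTheta₂_term _ hτ)
  simp_rw [term_integral] at hsum
  exact hsum.unique (hasSum_ite_eq 0 1)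

theorem thetaX_eq (τ x : ℂ) :
    thetaX τ x = fun w => jacobiTheta₂ (w + ((1 + τ) / 2 - x)) τ := by
  funext w
  rw [thetaX, theta3_eq_jacobiTheta₂, add_sub_assoc]

theorem phiFactor_eq (τ x w : ℂ) :
    phiFactor τ x w =
      exp (-(π * I * (τ + 2 * ((1 + τ) / 2 - x)))) * exp (-(2 * π * I * w)) := by
  rw [phiFactor, ← exp_add, show -(π * I * (τ + 2 * ((1 + τ) / 2 - x))) + -(2 * π * I * w) =
    -(2 * π * I) * (w + τ - x) - π * I by ring, exp_sub, exp_pi_mul_I, div_neg, div_one]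

theorem thetaX_mem_thetaFunctions {τ : ℂ} (hτ : 0 < τ.im) (x : ℂ) :
    thetaX τ x ∈ thetaFunctions τ (exp (-(π * I * (τ + 2 * ((1 + τ) / 2 - x))))) :=
  thetaX_eq τ x ▸ jacobiTheta₂_comp_add_mem_thetaFunctions hτ _

theorem integral_thetaX {τ : ℂ} (hτ : 0 < τ.im) (x : ℂ) :
    ∫ t in (0:ℝ)..1, thetaX τ x t = 1 := by
  simpa only [thetaX_eq] using integral_jacobiTheta₂_comp_add hτ ((1 + τ) / 2 - x)

/-- The space of entire solutions of the functional equations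
`f(w+1) = f(w)`, `f(w+τ) = φ_x(w) f(w)` is one-dimensional, spanned by `θ_x`. -/
theorem stmt5 (τ : ℂ) (hτ : 0 < τ.im) (x : ℂ) :
    (Differentiable ℂ (thetaX τ x) ∧
      (∀ w : ℂ, thetaX τ x (w + 1) = thetaX τ x w) ∧
      (∀ w : ℂ, thetaX τ x (w + τ) = phiFactor τ x w * thetaX τ x w)) ∧
    thetaX τ x ≠ 0 ∧
    (∀ f : ℂ → ℂ, Differentiable ℂ f → (∀ w : ℂ, f (w + 1) = f w) →
      (∀ w : ℂ, f (w + τ) = phiFactor τ x w * f w) →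
      ∃ c : ℂ, f = fun w => c * thetaX τ x w) := by
  have mem_iff (f : ℂ → ℂ) :
      f ∈ thetaFunctions τ (exp (-(π * I * (τ + 2 * ((1 + τ) / 2 - x))))) ↔
        Differentiable ℂ f ∧ Periodic f 1 ∧ ∀ w, f (w + τ) = phiFactor τ x w * f w := by
    simp only [phiFactor_eq]
    rfl
  have hθ := thetaX_mem_thetaFunctions hτ x
  refine ⟨(mem_iff _).1 hθ, fun h => by simpa [h] using integral_thetaX hτ x,
    fun f hf hf1 hfτ => ⟨∫ t in (0:ℝ)..1, f t, ?_⟩⟩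
  exact thetaFunctions.eq_integral_smul (exp_ne_zero _) ((mem_iff f).2 ⟨hf, hf1, hfτ⟩) hθ
    (integral_thetaX hτ x)
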